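/- Let $s$ be a random variable with the semicircle distribution of variance $\sigma^2$, and let $\theta > \sigma$. Then the Stieltjes transform of the semicircle law evaluated at $\rho_\theta = \theta + \sigma^2/\theta$ satisfies $\mathbb{E}\left[ \frac{1}{(\rho_\theta - s)^2} \right] = \frac{1}{\theta^2 - \sigma^2}$. -/

import Mathlib

/-!
On `[-a, a]` with `0 < a < ρ`, the function `√(a² - t²) / (ρ - t)²` has the elementary primitive
`-arcsin (t / a) - ρ / √(ρ² - a²) · arcsin ((a² - ρt) / (a(ρ - t))) + √(a² - t²) / (ρ - t)`,
continuous up to the endpoints: the Möbius map `u(t) = (a² - ρt) / (a(ρ - t))` satisfies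
`1 - u² = (ρ² - a²)(a² - t²) / (a(ρ - t))²`, so it sends `[-a, a]` onto `[-1, 1]`. This gives
`∫_{-a}^{a} √(a² - t²) / (ρ - t)² dt = π (ρ / √(ρ² - a²) - 1)`. For `a = 2σ` and
`ρ = θ + σ²/θ` one has `√(ρ² - a²) = θ - σ²/θ`, and the right-hand side becomes
`2πσ² / (θ² - σ²)`.
-/

open Real Set MeasureTheory intervalIntegral

/-- Density of the semicircle distribution of variance `σ^2`. -/
noncomputable def scDensity (σ t : ℝ) : ℝ :=
  if t ∈ Set.Icc (-(2*σ)) (2*σ) then (2 * Real.pi * σ^2)⁻¹ * Real.sqrt (4*σ^2 - t^2) else 0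

lemma hasDerivAt_sqrt_sq_sub {a t : ℝ} (h : 0 < a ^ 2 - t ^ 2) :
    HasDerivAt (fun x => √(a ^ 2 - x ^ 2)) (-t / √(a ^ 2 - t ^ 2)) t := by
  have hin : HasDerivAt (fun x : ℝ => a ^ 2 - x ^ 2) (-(2 * t)) t := by
    simpa using (hasDerivAt_pow 2 t).const_sub (a ^ 2)
  refine ((hasDerivAt_sqrt h.ne').comp t hin).congr_deriv ?_
  field_simp

lemma hasDerivAt_arcsin_div {a t : ℝ} (ha : 0 < a) (ht : t ∈ Ioo (-a) a) :
    HasDerivAt (fun x => arcsin (x / a)) (√(a ^ 2 - t ^ 2))⁻¹ t := by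
  obtain ⟨hlo, hhi⟩ := ht
  have hlo' : -1 < t / a := by rwa [lt_div_iff₀ ha, neg_one_mul]
  have hhi' : t / a < 1 := by rwa [div_lt_one ha]
  refine ((hasDerivAt_arcsin hlo'.ne' hhi'.ne).comp t
    ((hasDerivAt_id t).div_const a)).congr_deriv ?_
  rw [show 1 - (t / a) ^ 2 = (a ^ 2 - t ^ 2) / a ^ 2 by field_simp, sqrt_div' _ (sq_nonneg a),
    sqrt_sq ha.le]
  simp only [one_div, inv_div]
  field_simp

lemma one_sub_sq_moebius {a ρ t : ℝ} (ha : a ≠ 0) (ht : ρ - t ≠ 0) :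
    1 - ((a ^ 2 - ρ * t) / (a * (ρ - t))) ^ 2
      = (ρ ^ 2 - a ^ 2) * (a ^ 2 - t ^ 2) / (a * (ρ - t)) ^ 2 := by
  field_simp
  ring

lemma hasDerivAt_arcsin_moebius {a ρ t : ℝ} (ha : 0 < a) (hρ : a < ρ) (ht : t ∈ Ioo (-a) a) :
    HasDerivAt (fun x => arcsin ((a ^ 2 - ρ * x) / (a * (ρ - x))))
      (-√(ρ ^ 2 - a ^ 2) / ((ρ - t) * √(a ^ 2 - t ^ 2))) t := by
  obtain ⟨hlo, hhi⟩ := ht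
  have hρt : 0 < ρ - t := by linarith
  have hq : 0 < a ^ 2 - t ^ 2 := by nlinarith
  have hs : 0 < ρ ^ 2 - a ^ 2 := by nlinarith
  set u := (a ^ 2 - ρ * t) / (a * (ρ - t))
  have hu : 0 < 1 - u ^ 2 := by
    rw [one_sub_sq_moebius ha.ne' hρt.ne']
    positivity
  have hsqrt : √(1 - u ^ 2) = √(ρ ^ 2 - a ^ 2) * √(a ^ 2 - t ^ 2) / (a * (ρ - t)) := by
    rw [one_sub_sq_moebius ha.ne' hρt.ne', sqrt_div' _ (sq_nonneg _), sqrt_sq (by positivity),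
      sqrt_mul hs.le]
  have hu1 : u ≠ 1 := fun h => by simp [h] at hu
  have hu2 : u ≠ -1 := fun h => by simp [h] at hu
  have hnum : HasDerivAt (fun x : ℝ => a ^ 2 - ρ * x) (-ρ) t := by
    simpa using ((hasDerivAt_id t).const_mul ρ).const_sub (a ^ 2)
  have hden : HasDerivAt (fun x : ℝ => a * (ρ - x)) (-a) t := by
    simpa using ((hasDerivAt_id t).const_sub ρ).const_mul a
  refine ((hasDerivAt_arcsin hu2 hu1).comp t (hnum.div hden (by positivity))).congr_deriv ?_
  rw [hsqrt]
  have : 0 < √(a ^ 2 - t ^ 2) := sqrt_pos.mpr hq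
  field_simp
  linear_combination sq_sqrt hs.le

noncomputable def sqrtDivSqPrimitive (a ρ t : ℝ) : ℝ :=
  -arcsin (t / a) - ρ / √(ρ ^ 2 - a ^ 2) * arcsin ((a ^ 2 - ρ * t) / (a * (ρ - t)))
    + √(a ^ 2 - t ^ 2) / (ρ - t)

lemma hasDerivAt_sqrtDivSqPrimitive {a ρ t : ℝ} (ha : 0 < a) (hρ : a < ρ)
    (ht : t ∈ Ioo (-a) a) :
    HasDerivAt (sqrtDivSqPrimitive a ρ) (((ρ - t) ^ 2)⁻¹ * √(a ^ 2 - t ^ 2)) t := by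
  have hρt : ρ - t ≠ 0 := by linarith [ht.2]
  have hq : 0 < a ^ 2 - t ^ 2 := by nlinarith [ht.1, ht.2]
  have hs : 0 < ρ ^ 2 - a ^ 2 := by nlinarith
  have hquot : HasDerivAt (fun x => √(a ^ 2 - x ^ 2) / (ρ - x))
      ((-t / √(a ^ 2 - t ^ 2) * (ρ - t) - √(a ^ 2 - t ^ 2) * -1) / (ρ - t) ^ 2) t :=
    (hasDerivAt_sqrt_sq_sub hq).div ((hasDerivAt_id t).const_sub ρ) hρt
  refine (((hasDerivAt_arcsin_div ha ht).neg.sub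
    ((hasDerivAt_arcsin_moebius ha hρ ht).const_mul _)).add hquot).congr_deriv ?_
  have : 0 < √(a ^ 2 - t ^ 2) := sqrt_pos.mpr hq
  have : 0 < √(ρ ^ 2 - a ^ 2) := sqrt_pos.mpr hs
  field_simp
  ring

lemma continuousOn_sqrtDivSqPrimitive {a ρ : ℝ} (ha : 0 < a) (hρ : a < ρ) :
    ContinuousOn (sqrtDivSqPrimitive a ρ) (Icc (-a) a) := by
  have hne : ∀ t ∈ Icc (-a) a, ρ - t ≠ 0 := fun t ht => by linarith [ht.2]
  have hne' : ∀ t ∈ Icc (-a) a, a * (ρ - t) ≠ 0 := fun t ht => mul_ne_zero ha.ne' (hne t ht)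
  exact ((continuous_arcsin.comp_continuousOn (by fun_prop)).neg.sub
    (continuousOn_const.mul (continuous_arcsin.comp_continuousOn
      ((by fun_prop : ContinuousOn (fun t => a ^ 2 - ρ * t) _).div (by fun_prop) hne')))).add
    ((by fun_prop : ContinuousOn (fun t => √(a ^ 2 - t ^ 2)) _).div (by fun_prop) hne)

lemma sqrtDivSqPrimitive_sub {a ρ : ℝ} (ha : 0 < a) (hρ : a < ρ) :
    sqrtDivSqPrimitive a ρ a - sqrtDivSqPrimitive a ρ (-a) = π * (ρ / √(ρ ^ 2 - a ^ 2) - 1) := by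
  have h1 : (a ^ 2 - ρ * a) / (a * (ρ - a)) = -1 := by
    field_simp [show ρ - a ≠ 0 by linarith]; ring
  have h2 : (a ^ 2 - ρ * -a) / (a * (ρ - -a)) = 1 := by
    field_simp [show ρ + a ≠ 0 by linarith]; ring
  simp only [sqrtDivSqPrimitive]
  rw [h1, h2]
  simp only [ne_eq, ha.ne', not_false_eq_true, div_self, arcsin_one, arcsin_neg, mul_neg,
    sub_neg_eq_add, sub_self, sqrt_zero, zero_div, add_zero, neg_div_self, neg_neg, even_two,
    Even.neg_pow]
  ring

theorem integral_inv_sq_mul_sqrt {a ρ : ℝ} (ha : 0 < a) (hρ : a < ρ) :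
    ∫ t in (-a)..a, ((ρ - t) ^ 2)⁻¹ * √(a ^ 2 - t ^ 2) = π * (ρ / √(ρ ^ 2 - a ^ 2) - 1) := by
  rw [integral_eq_sub_of_hasDerivAt_of_le (by linarith) (continuousOn_sqrtDivSqPrimitive ha hρ)
    (fun t ht => hasDerivAt_sqrtDivSqPrimitive ha hρ ht), sqrtDivSqPrimitive_sub ha hρ]
  refine ContinuousOn.intervalIntegrable ?_
  have hne : ∀ t ∈ uIcc (-a) a, (ρ - t) ^ 2 ≠ 0 := fun t ht => by
    rw [uIcc_of_le (by linarith)] at ht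
    exact pow_ne_zero 2 (by linarith [ht.2])
  fun_prop (disch := exact hne)

lemma integral_mul_scDensity {σ : ℝ} (hσ : 0 ≤ σ) (f : ℝ → ℝ) :
    ∫ t, f t * scDensity σ t
      = (2 * π * σ ^ 2)⁻¹ * ∫ t in (-(2 * σ))..(2 * σ), f t * √((2 * σ) ^ 2 - t ^ 2) := by
  have hind : (fun t => f t * scDensity σ t) = (Icc (-(2 * σ)) (2 * σ)).indicator
      fun t => (2 * π * σ ^ 2)⁻¹ * (f t * √((2 * σ) ^ 2 - t ^ 2)) := by
    ext t
    rw [indicator_apply, scDensity, show (2 * σ) ^ 2 = 4 * σ ^ 2 by ring]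
    split_ifs
    · ring
    · rw [mul_zero]
  rw [hind, MeasureTheory.integral_indicator measurableSet_Icc, integral_Icc_eq_integral_Ioc,
    ← integral_of_le (by linarith), intervalIntegral.integral_const_mul]

theorem semicircle_second_moment_at_rho (σ θ : ℝ) (hσ : 0 < σ) (hθ : σ < θ) :
    ∫ t : ℝ, (((θ + σ^2 / θ) - t)^2)⁻¹ * scDensity σ t = (θ^2 - σ^2)⁻¹ := by
  have hθ0 : 0 < θ := hσ.trans hθ
  have hgap : 0 < θ - σ ^ 2 / θ := by
    rw [sub_pos, div_lt_iff₀ hθ0]; nlinarith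
  have hρ : 2 * σ < θ + σ ^ 2 / θ := by
    rw [← sub_pos, show θ + σ ^ 2 / θ - 2 * σ = (θ - σ) ^ 2 / θ by field_simp; ring]
    exact div_pos (pow_pos (sub_pos.mpr hθ) 2) hθ0
  have hsqrt : √((θ + σ ^ 2 / θ) ^ 2 - (2 * σ) ^ 2) = θ - σ ^ 2 / θ := by
    rw [show (θ + σ ^ 2 / θ) ^ 2 - (2 * σ) ^ 2 = (θ - σ ^ 2 / θ) ^ 2 by field_simp; ring,
      sqrt_sq hgap.le]
  rw [integral_mul_scDensity hσ.le, integral_inv_sq_mul_sqrt (by positivity) hρ, hsqrt]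
  have : θ ^ 2 - σ ^ 2 ≠ 0 := by nlinarith
  field_simp
  ring
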